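/- Let r be a real number with |r| < 1. Define W(r) = ∑_{n odd, n≥1} ζ(n+1) r^{n+1}, A₂(r) = ∑_{n≥1} 1/(n(n + 1 − r)) and B₂(r) = ∑_{n≥1} 1/(n(n + 1 + r)). Then 2W(r) = r ( 2r/(1 − r²) + (r − 1) A₂(r) + (r + 1) B₂(r) ). -/
import Mathlib


/-- `W(r) = ∑_{n odd, n ≥ 1} ζ(n+1) r^(n+1)` (sum over odd `n = 2k+1`). -/
noncomputable def W (r : ℝ) : ℝ :=
  ∑' k : ℕ, (riemannZeta (2 * k + 2)).re * r ^ (2 * k + 2)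

/-- `A₂(r) = ∑_{n ≥ 1} 1/(n(n + 1 - r))`. -/
noncomputable def A₂ (r : ℝ) : ℝ :=
  ∑' n : ℕ, 1 / (((n : ℝ) + 1) * (((n : ℝ) + 1) + 1 - r))

/-- `B₂(r) = ∑_{n ≥ 1} 1/(n(n + 1 + r))`. -/
noncomputable def B₂ (r : ℝ) : ℝ :=
  ∑' n : ℕ, 1 / (((n : ℝ) + 1) * (((n : ℝ) + 1) + 1 + r))

lemma zeta_re_eq (k : ℕ) :
    (riemannZeta (2 * (k : ℂ) + 2)).re = ∑' n : ℕ, 1 / ((n : ℝ) + 1) ^ (2 * k + 2) := by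
  have h1 : (2 * (k : ℂ) + 2) = ((2 * k + 2 : ℕ) : ℂ) := by push_cast; ring
  rw [h1, zeta_eq_tsum_one_div_nat_add_one_cpow
    (by rw [Complex.natCast_re]; exact_mod_cast (by omega : 1 < 2 * k + 2))]
  have h2 : ∀ n : ℕ, (1 : ℂ) / ((n : ℂ) + 1) ^ ((2 * k + 2 : ℕ) : ℂ)
      = ((1 / ((n : ℝ) + 1) ^ (2 * k + 2) : ℝ) : ℂ) := by
    intro n
    rw [Complex.cpow_natCast]
    push_cast
    ring
  rw [tsum_congr h2, ← Complex.ofReal_tsum, Complex.ofReal_re]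

theorem stmt11 (r : ℝ) (hr : |r| < 1) :
    2 * W r = r * (2 * r / (1 - r ^ 2) + (r - 1) * A₂ r + (r + 1) * B₂ r) := by
  obtain ⟨hrl, hru⟩ := abs_lt.mp hr
  have hr2 : r ^ 2 < 1 := by nlinarith
  have hr2' : 0 < 1 - r ^ 2 := by linarith
  have hd : ∀ n : ℕ, 0 < ((n : ℝ) + 1) ^ 2 - r ^ 2 := by
    intro n
    have hn : (0 : ℝ) ≤ (n : ℝ) := Nat.cast_nonneg n
    nlinarith
  have hsq : Summable fun n : ℕ => 1 / ((n : ℝ) + 1) ^ 2 := by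
    have h := (summable_nat_add_iff 1).mpr (Real.summable_one_div_nat_pow.mpr one_lt_two)
    exact h.congr fun n => by push_cast; ring
  set F : ℕ × ℕ → ℝ := fun p => (r / ((p.2 : ℝ) + 1)) ^ (2 * p.1 + 2) with hF
  have hFnn : ∀ p, 0 ≤ F p := fun p => Even.pow_nonneg ⟨p.1 + 1, by ring⟩ _
  have hrpow : ∀ k : ℕ, 0 ≤ r ^ (2 * k + 2) := fun k => Even.pow_nonneg ⟨k + 1, by ring⟩ r
  have hFle : ∀ k n : ℕ, F (k, n) ≤ r ^ (2 * k + 2) * (1 / ((n : ℝ) + 1) ^ 2) := by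
    intro k n
    have hn1 : (0 : ℝ) < (n : ℝ) + 1 := by positivity
    have : F (k, n) = r ^ (2 * k + 2) / ((n : ℝ) + 1) ^ (2 * k + 2) := by
      rw [hF]; simp only [div_pow]
    rw [this, mul_one_div]
    gcongr
    · exact hrpow k
    · linarith
    · omega
  have hrow : ∀ k : ℕ, Summable fun n : ℕ => F (k, n) := fun k =>
    Summable.of_nonneg_of_le (fun n => hFnn _) (fun n => hFle k n) (hsq.mul_left _)
  set C : ℝ := ∑' n : ℕ, 1 / ((n : ℝ) + 1) ^ 2 with hC
  have hcol : Summable fun k : ℕ => ∑' n : ℕ, F (k, n) := by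
    apply Summable.of_nonneg_of_le
      (fun k => tsum_nonneg fun n => hFnn _)
      (fun k => ?_) (((summable_geometric_of_lt_one (sq_nonneg r) hr2).mul_right (r ^ 2 * C)))
    calc ∑' n : ℕ, F (k, n) ≤ ∑' n : ℕ, r ^ (2 * k + 2) * (1 / ((n : ℝ) + 1) ^ 2) :=
          Summable.tsum_le_tsum (fun n => hFle k n) (hrow k) (hsq.mul_left _)
      _ = r ^ (2 * k + 2) * C := tsum_mul_left
      _ = (r ^ 2) ^ k * (r ^ 2 * C) := by rw [pow_add, pow_mul]; ring
  have hFsum : Summable F := (summable_prod_of_nonneg hFnn).mpr ⟨hrow, hcol⟩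
  have hgeo : ∀ n : ℕ, ∑' k : ℕ, F (k, n) = r ^ 2 / (((n : ℝ) + 1) ^ 2 - r ^ 2) := by
    intro n
    have hn1 : (0 : ℝ) < (n : ℝ) + 1 := by positivity
    set x : ℝ := r / ((n : ℝ) + 1) with hx
    have hxabs : |x| < 1 := by
      rw [hx, abs_div, abs_of_pos hn1]
      calc |r| / ((n : ℝ) + 1) ≤ |r| := div_le_self (abs_nonneg r) (by linarith)
        _ < 1 := hr
    have hx2 : x ^ 2 < 1 := by nlinarith [abs_nonneg x, sq_abs x]
    have hx2' : (1 : ℝ) - x ^ 2 ≠ 0 := by nlinarith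
    have h1 : ∀ k : ℕ, F (k, n) = x ^ 2 * (x ^ 2) ^ k := by
      intro k
      show (r / ((n : ℝ) + 1)) ^ (2 * k + 2) = x ^ 2 * (x ^ 2) ^ k
      rw [hx, pow_add, pow_mul, mul_comm]
    rw [tsum_congr h1, tsum_mul_left, tsum_geometric_of_lt_one (sq_nonneg x) hx2]
    rw [hx]
    have hden : (((n : ℝ) + 1) ^ 2 - r ^ 2) ≠ 0 := ne_of_gt (hd n)
    field_simp
  have hW2 : 2 * W r = ∑' n : ℕ, 2 * r ^ 2 / (((n : ℝ) + 1) ^ 2 - r ^ 2) := by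
    have h1 : W r = ∑' k : ℕ, ∑' n : ℕ, F (k, n) := by
      unfold W
      refine tsum_congr fun k => ?_
      rw [zeta_re_eq k, ← tsum_mul_right]
      refine tsum_congr fun n => ?_
      rw [hF]; simp only [div_pow]
      ring
    have h2 : ∑' n : ℕ, ∑' k : ℕ, F (k, n) = ∑' k : ℕ, ∑' n : ℕ, F (k, n) :=
      Summable.tsum_comm (f := fun k n => F (k, n)) hFsum
    rw [h1, ← h2, ← tsum_mul_left]
    exact tsum_congr fun n => by rw [hgeo n]; ring
  -- summabilities for A₂ and B₂
  have hApos : ∀ n : ℕ, (0 : ℝ) < ((n : ℝ) + 1) * (((n : ℝ) + 1) + 1 - r) := by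
    intro n
    have hn : (0 : ℝ) ≤ (n : ℝ) := Nat.cast_nonneg n
    nlinarith
  have hBpos : ∀ n : ℕ, (0 : ℝ) < ((n : ℝ) + 1) * (((n : ℝ) + 1) + 1 + r) := by
    intro n
    have hn : (0 : ℝ) ≤ (n : ℝ) := Nat.cast_nonneg n
    nlinarith
  have hA : Summable fun n : ℕ => 1 / (((n : ℝ) + 1) * (((n : ℝ) + 1) + 1 - r)) := by
    apply Summable.of_nonneg_of_le (fun n => le_of_lt (one_div_pos.mpr (hApos n)))
      (fun n => ?_) hsq
    · have hn : (0 : ℝ) ≤ (n : ℝ) := Nat.cast_nonneg n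
      apply one_div_le_one_div_of_le (by positivity)
      nlinarith
  have hB : Summable fun n : ℕ => 1 / (((n : ℝ) + 1) * (((n : ℝ) + 1) + 1 + r)) := by
    apply Summable.of_nonneg_of_le (fun n => le_of_lt (one_div_pos.mpr (hBpos n)))
      (fun n => ?_) hsq
    · have hn : (0 : ℝ) ≤ (n : ℝ) := Nat.cast_nonneg n
      apply one_div_le_one_div_of_le (by positivity)
      nlinarith
  have hAB : (r - 1) * A₂ r + (r + 1) * B₂ r
      = ∑' n : ℕ, 2 * r / (((n : ℝ) + 2) ^ 2 - r ^ 2) := by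
    unfold A₂ B₂
    rw [← tsum_mul_left, ← tsum_mul_left, ← Summable.tsum_add (hA.mul_left _) (hB.mul_left _)]
    refine tsum_congr fun n => ?_
    have hn : (0 : ℝ) ≤ (n : ℝ) := Nat.cast_nonneg n
    have h1 : (0 : ℝ) < (n : ℝ) + 1 := by positivity
    have h2 : (0 : ℝ) < (n : ℝ) + 1 + 1 - r := by nlinarith
    have h3 : (0 : ℝ) < (n : ℝ) + 1 + 1 + r := by nlinarith
    have h4 : ((n : ℝ) + 2) ^ 2 - r ^ 2 ≠ 0 := by nlinarith
    field_simp
    ring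
  have hS : Summable fun n : ℕ => 2 * r ^ 2 / (((n : ℝ) + 1) ^ 2 - r ^ 2) := by
    apply Summable.of_nonneg_of_le (fun n => div_nonneg (by positivity) (hd n).le) (fun n => ?_)
      (hsq.mul_left (2 * r ^ 2 / (1 - r ^ 2)))
    have hn : (0 : ℝ) ≤ (n : ℝ) := Nat.cast_nonneg n
    have heq : 2 * r ^ 2 / (1 - r ^ 2) * (1 / ((n : ℝ) + 1) ^ 2)
        = 2 * r ^ 2 / ((1 - r ^ 2) * ((n : ℝ) + 1) ^ 2) := by
      rw [div_mul_div_comm, mul_one]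
    rw [heq]
    gcongr
    all_goals nlinarith [mul_nonneg (sq_nonneg r) (show (0:ℝ) ≤ ((n : ℝ) + 1) ^ 2 - 1 from by nlinarith)]
  -- assemble
  rw [hW2, show 2 * r / (1 - r ^ 2) + (r - 1) * A₂ r + (r + 1) * B₂ r
      = 2 * r / (1 - r ^ 2) + ((r - 1) * A₂ r + (r + 1) * B₂ r) from by ring,
    hAB, Summable.tsum_eq_zero_add hS]
  have hshift : ∀ n : ℕ, 2 * r ^ 2 / ((((n + 1 : ℕ) : ℝ) + 1) ^ 2 - r ^ 2)
      = r * (2 * r / (((n : ℝ) + 2) ^ 2 - r ^ 2)) := by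
    intro n
    push_cast
    ring
  rw [tsum_congr hshift, tsum_mul_left]
  push_cast
  ring
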